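/- Let Λ be a nonempty subset of (0,∞)ⁿ. For β ∈ ℝⁿ, the equality Ω(β|Λ) = ‖β‖₁ holds if and only if the vector |β| = (|β₁|,…,|βₙ|) belongs to the closure of Λ. -/

import Mathlib

/-!
Completing the square coordinatewise, `½ (β²/λ + λ) = |β| + (λ - |β|)²/(2λ)` for `λ > 0`,
so `Ω(β|Λ) - ‖β‖₁` is the infimum over `Λ` of `E(λ) = Σᵢ (λᵢ - |βᵢ|)²/(2λᵢ) ≥ 0`.
On the positive orthant `E` is small exactly near `b = |β|`: it is continuous at `b` and
vanishes there, and conversely `(λᵢ - bᵢ)² ≤ 2 E(λ) λᵢ ≤ 2 E(λ) (bᵢ + |λᵢ - bᵢ|)` forces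
`|λᵢ - bᵢ|` to be small when `E(λ)` is.
-/

open Filter Topology Finset

/-- `½ Σᵢ (βᵢ²/λᵢ + λᵢ) - ‖β‖₁`, written in terms of `b = |β|`. -/
noncomputable def omegaExcess {ι : Type*} [Fintype ι] (b l : ι → ℝ) : ℝ :=
  ∑ i, (l i - b i) ^ 2 / (2 * l i)

lemma half_sq_div_add_self_eq {l : ℝ} (hl : l ≠ 0) (β : ℝ) :
    1 / 2 * (β ^ 2 / l + l) = |β| + (l - |β|) ^ 2 / (2 * l) := by
  field_simp
  rw [← sq_abs β]
  ring

lemma abs_sub_lt_of_sq_sub_div_lt {l b ε : ℝ} (hl : 0 < l) (hb : 0 ≤ b) (hε : 0 < ε)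
    (h : (l - b) ^ 2 / (2 * l) < ε ^ 2 / (2 * (b + ε))) : |l - b| < ε := by
  by_contra! hεx
  rw [div_lt_div_iff₀ (by positivity) (by positivity)] at h
  have hl_le : l ≤ b + |l - b| := by linarith [le_abs_self (l - b)]
  nlinarith [sq_abs (l - b),
    mul_nonneg (mul_nonneg hε.le (abs_nonneg (l - b))) (sub_nonneg.2 hεx),
    mul_le_mul_of_nonneg_right (pow_le_pow_left₀ hε.le hεx 2) hb]

lemma continuousAt_sq_sub_div {b : ℝ} (hb : 0 ≤ b) :
    ContinuousAt (fun l => (l - b) ^ 2 / (2 * l)) b := by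
  rcases hb.eq_or_lt with rfl | hb
  · have half : (fun l : ℝ => (l - 0) ^ 2 / (2 * l)) = fun l => l / 2 := by
      funext l
      rw [sub_zero]
      rcases eq_or_ne l 0 with rfl | hl
      · simp
      · field_simp
    rw [half]
    fun_prop
  · exact ContinuousAt.div (by fun_prop) (by fun_prop) (by positivity)

section omegaExcess

variable {ι : Type*} [Fintype ι]

lemma omegaExcess_self (b : ι → ℝ) : omegaExcess b b = 0 := by
  simp [omegaExcess]

lemma sq_sub_div_le_omegaExcess (b : ι → ℝ) {l : ι → ℝ} (hl : ∀ i, 0 ≤ l i) (i : ι) :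
    (l i - b i) ^ 2 / (2 * l i) ≤ omegaExcess b l :=
  single_le_sum (f := fun j => (l j - b j) ^ 2 / (2 * l j))
    (fun j _ => div_nonneg (sq_nonneg _) (by linarith [hl j])) (mem_univ i)

lemma omegaExcess_nonneg (b : ι → ℝ) {l : ι → ℝ} (hl : ∀ i, 0 ≤ l i) : 0 ≤ omegaExcess b l :=
  sum_nonneg fun i _ => div_nonneg (sq_nonneg _) (by linarith [hl i])

lemma half_sum_sq_div_add_eq (β : ι → ℝ) {l : ι → ℝ} (hl : ∀ i, l i ≠ 0) :
    1 / 2 * ∑ i, (β i ^ 2 / l i + l i) = ∑ i, |β i| + omegaExcess (fun i => |β i|) l := by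
  rw [omegaExcess, mul_sum, ← sum_add_distrib]
  exact sum_congr rfl fun i _ => half_sq_div_add_self_eq (hl i) (β i)

lemma continuousAt_omegaExcess {b : ι → ℝ} (hb : ∀ i, 0 ≤ b i) :
    ContinuousAt (omegaExcess b) b :=
  tendsto_finsetSum univ fun i _ =>
    (continuousAt_sq_sub_div (hb i)).comp (f := fun l : ι → ℝ => l i)
      (continuous_apply i).continuousAt

lemma mem_closure_iff_omegaExcess_lt {Λ : Set (ι → ℝ)} (hpos : ∀ l ∈ Λ, ∀ i, 0 < l i)
    {b : ι → ℝ} (hb : ∀ i, 0 ≤ b i) :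
    b ∈ closure Λ ↔ ∀ ε > 0, ∃ l ∈ Λ, omegaExcess b l < ε := by
  constructor
  · intro hbΛ ε hε
    have hnear : ∀ᶠ l in 𝓝 b, omegaExcess b l < ε :=
      (continuousAt_omegaExcess hb).eventually_lt continuousAt_const (by rwa [omegaExcess_self])
    obtain ⟨l, hlε, hl⟩ := (hnear.and_frequently (mem_closure_iff_frequently.1 hbΛ)).exists
    exact ⟨l, hl, hlε⟩
  · intro hsmall
    rw [Metric.mem_closure_iff]
    intro ε hε
    set M := ∑ i, b i
    obtain ⟨l, hl, hlε⟩ := hsmall (ε ^ 2 / (2 * (M + ε)))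
      (by have := sum_nonneg fun i (_ : i ∈ univ) => hb i; positivity)
    refine ⟨l, hl, (dist_pi_lt_iff hε).2 fun i => ?_⟩
    rw [Real.dist_eq, abs_sub_comm]
    refine abs_sub_lt_of_sq_sub_div_lt (hpos l hl i) (hb i) hε ?_
    calc (l i - b i) ^ 2 / (2 * l i)
        ≤ omegaExcess b l := sq_sub_div_le_omegaExcess b (fun j => (hpos l hl j).le) i
      _ < ε ^ 2 / (2 * (M + ε)) := hlε
      _ ≤ ε ^ 2 / (2 * (b i + ε)) := by
          have := single_le_sum (fun j _ => hb j) (mem_univ i)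
          gcongr
          linarith [hb i]

end omegaExcess

lemma sInf_eq_iff_forall_exists_lt {α : Type*} {Λ : Set α} (hne : Λ.Nonempty) {f g : α → ℝ}
    {c : ℝ} (hfg : ∀ l ∈ Λ, f l = c + g l) (hg : ∀ l ∈ Λ, 0 ≤ g l) :
    sInf {t | ∃ l ∈ Λ, t = f l} = c ↔ ∀ ε > 0, ∃ l ∈ Λ, g l < ε := by
  have hS : {t | ∃ l ∈ Λ, t = f l}.Nonempty :=
    let ⟨l, hl⟩ := hne
    ⟨f l, l, hl, rfl⟩
  have hlow : ∀ t ∈ {t | ∃ l ∈ Λ, t = f l}, c ≤ t := by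
    rintro t ⟨l, hl, rfl⟩
    linarith [hfg l hl, hg l hl]
  constructor
  · intro hinf ε hε
    obtain ⟨t, ⟨l, hl, rfl⟩, hlt⟩ := Real.lt_sInf_add_pos hS hε
    exact ⟨l, hl, by linarith [hfg l hl]⟩
  · intro hsmall
    refine le_antisymm (le_of_forall_pos_lt_add fun ε hε => ?_) (le_csInf hS hlow)
    obtain ⟨l, hl, hlε⟩ := hsmall ε hε
    calc sInf {t | ∃ l ∈ Λ, t = f l} ≤ f l := csInf_le ⟨c, hlow⟩ ⟨l, hl, rfl⟩
      _ < c + ε := by linarith [hfg l hl]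

theorem stmt_3 (n : ℕ) (Λ : Set (Fin n → ℝ)) (hne : Λ.Nonempty)
    (hpos : ∀ l ∈ Λ, ∀ i, 0 < l i) (β : Fin n → ℝ) :
    sInf {t : ℝ | ∃ l ∈ Λ, t = (1/2) * ∑ i, (β i ^ 2 / l i + l i)} = ∑ i, |β i| ↔
      (fun i => |β i|) ∈ closure Λ :=
  (sInf_eq_iff_forall_exists_lt hne
      (fun l hl => half_sum_sq_div_add_eq β fun i => (hpos l hl i).ne')
      (fun l hl => omegaExcess_nonneg _ fun i => (hpos l hl i).le)).trans
    (mem_closure_iff_omegaExcess_lt hpos fun i => abs_nonneg (β i)).symm
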